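/- arXiv:0805.1593 — 6 statements merged into one kernel-verified Lean document; each statement's English description precedes it below -/
import Mathlib

section
/- With F(t) = Σ_m C(n,m) F_m t^m and G(t) = Σ_k C(n,k) G_{n−k} t^k as defined for an isotropic distribution, G(t) = (−1)^n F(−1−t). -/
/-!
Both sides equal `∑ j, C(n,j) p_j t^(n-j) (t+1)^j`. Indeed `F` is the binomial transform of
`p`, and `G(n - k)` is the binomial transform of the reversed sequence `i ↦ p (n - i)`; for
any sequence `q`, the identity `C(n,m) C(m,i) = C(n,i) C(n-i,m-i)` and the binomial theorem
give `∑ m, C(n,m) (∑ i, C(m,i) q_i) u^m = ∑ i, C(n,i) q_i u^i (u+1)^(n-i)`.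
Taking `u = t` for `G` and `u = -1-t` for `F`, the substitution turns `u + 1` into `-t`.
-/

open Finset

section BinomialTransform

variable {R : Type*} [CommSemiring R]

def binomialTransform (q : ℕ → R) (m : ℕ) : R :=
  ∑ i ∈ range (m + 1), (m.choose i : R) * q i

theorem binomialTransform_eq_sum_range {m N : ℕ} (h : m ≤ N) (q : ℕ → R) :
    binomialTransform q m = ∑ i ∈ range (N + 1), (m.choose i : R) * q i := by
  refine sum_subset (range_subset_range.mpr (by omega)) fun i _ hi => ?_
  rw [Nat.choose_eq_zero_of_lt (by simp at hi; omega), Nat.cast_zero, zero_mul]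

theorem sum_choose_mul_choose_mul_pow {n a : ℕ} (ha : a ≤ n) (u : R) :
    ∑ k ∈ range (n + 1), (n.choose k : R) * k.choose a * u ^ k
      = n.choose a * u ^ a * (u + 1) ^ (n - a) := by
  rw [show n + 1 = a + (n - a + 1) by omega, sum_range_add, add_pow, mul_sum]
  have below : ∑ k ∈ range a, (n.choose k : R) * k.choose a * u ^ k = 0 :=
    sum_eq_zero fun k hk => by
      rw [Nat.choose_eq_zero_of_lt (mem_range.mp hk), Nat.cast_zero, mul_zero, zero_mul]
  rw [below, zero_add]
  refine sum_congr rfl fun s _ => ?_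
  have hchoose : (n.choose (a + s) : R) * (a + s).choose a = n.choose a * (n - a).choose s := by
    rw [← Nat.cast_mul, ← Nat.cast_mul, Nat.choose_mul (by omega), Nat.add_sub_cancel_left]
  rw [pow_add, one_pow, mul_one, hchoose]
  ring

theorem sum_choose_mul_binomialTransform_mul_pow (n : ℕ) (q : ℕ → R) (u : R) :
    ∑ m ∈ range (n + 1), (n.choose m : R) * binomialTransform q m * u ^ m
      = ∑ i ∈ range (n + 1), (n.choose i : R) * q i * u ^ i * (u + 1) ^ (n - i) := by
  calc _ = ∑ m ∈ range (n + 1), ∑ i ∈ range (n + 1),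
        q i * ((n.choose m : R) * m.choose i * u ^ m) := by
        refine sum_congr rfl fun m hm => ?_
        rw [binomialTransform_eq_sum_range (Nat.lt_succ_iff.mp (mem_range.mp hm)), mul_sum, sum_mul]
        exact sum_congr rfl fun i _ => by ring
    _ = ∑ i ∈ range (n + 1),
          q i * ∑ m ∈ range (n + 1), (n.choose m : R) * m.choose i * u ^ m := by
        rw [sum_comm]; simp only [mul_sum]
    _ = _ := sum_congr rfl fun i hi => by
        rw [sum_choose_mul_choose_mul_pow (Nat.lt_succ_iff.mp (mem_range.mp hi))]; ring

theorem sum_Icc_choose_sub_eq_binomialTransform_reflect (p : ℕ → R) {a n : ℕ} (ha : a ≤ n) :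
    ∑ j ∈ Icc a n, ((n - a).choose (j - a) : R) * p j
      = binomialTransform (fun i => p (n - i)) (n - a) := by
  refine sum_nbij' (fun j => n - j) (fun i => n - i)
    (fun j hj => by simp only [mem_Icc, mem_range] at hj ⊢; omega)
    (fun i hi => by simp only [mem_Icc, mem_range] at hi ⊢; omega)
    (fun j hj => by simp only [mem_Icc] at hj; omega)
    (fun i hi => by simp only [mem_range] at hi; omega) fun j hj => ?_
  simp only [mem_Icc] at hj
  dsimp only
  rw [← Nat.choose_symm (by omega), show n - a - (j - a) = n - j by omega, Nat.sub_sub_self hj.2]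

theorem neg_one_pow_mul_neg_pow_mul_neg_pow {R : Type*} [CommRing R] {i n : ℕ} (hi : i ≤ n)
    (x y : R) : (-1) ^ n * ((-x) ^ i * (-y) ^ (n - i)) = x ^ i * y ^ (n - i) := by
  obtain ⟨d, rfl⟩ := Nat.exists_eq_add_of_le hi
  rw [Nat.add_sub_cancel_left, neg_pow x, neg_pow y, pow_add]
  have hsq : ((-1 : R) ^ i) * (-1) ^ i = 1 := by rw [← pow_add, Even.neg_one_pow ⟨i, rfl⟩]
  have hsq' : ((-1 : R) ^ d) * (-1) ^ d = 1 := by rw [← pow_add, Even.neg_one_pow ⟨d, rfl⟩]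
  linear_combination (x ^ i * y ^ d * (-1) ^ d * (-1) ^ d) * hsq + x ^ i * y ^ d * hsq'

theorem stmt5_general (n : ℕ) (p : ℕ → ℝ)
    (F : ℕ → ℝ) (hF : ∀ a, F a = ∑ k ∈ Finset.range (a + 1), (a.choose k : ℝ) * p k)
    (G : ℕ → ℝ)
    (hG : ∀ a, G a = ∑ k ∈ Finset.Icc a n, ((n - a).choose (k - a) : ℝ) * p k)
    (t : ℝ) :
    (∑ k ∈ Finset.range (n + 1), (n.choose k : ℝ) * G (n - k) * t ^ k)
      = (-1) ^ n * ∑ m ∈ Finset.range (n + 1), (n.choose m : ℝ) * F m * (-1 - t) ^ m := by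
  have hF' : F = binomialTransform p := funext hF
  have hG' : ∀ k ∈ range (n + 1), G (n - k) = binomialTransform (fun i => p (n - i)) k := by
    intro k hk
    have hk : k ≤ n := Nat.lt_succ_iff.mp (mem_range.mp hk)
    rw [hG, sum_Icc_choose_sub_eq_binomialTransform_reflect p (Nat.sub_le n k), Nat.sub_sub_self hk]
  calc _ = ∑ k ∈ range (n + 1),
          (n.choose k : ℝ) * binomialTransform (fun i => p (n - i)) k * t ^ k :=
        sum_congr rfl fun k hk => by rw [hG' k hk]
    _ = ∑ i ∈ range (n + 1), (n.choose i : ℝ) * p (n - i) * t ^ i * (t + 1) ^ (n - i) :=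
        sum_choose_mul_binomialTransform_mul_pow n _ t
    _ = ∑ j ∈ range (n + 1), (n.choose j : ℝ) * p j * (t ^ (n - j) * (t + 1) ^ j) := by
        rw [← sum_range_reflect]
        refine sum_congr rfl fun j hj => ?_
        have hj : j ≤ n := Nat.lt_succ_iff.mp (mem_range.mp hj)
        rw [Nat.add_sub_cancel, Nat.choose_symm hj, Nat.sub_sub_self hj, mul_assoc]
    _ = (-1) ^ n * ∑ i ∈ range (n + 1),
          (n.choose i : ℝ) * p i * (-1 - t) ^ i * (-1 - t + 1) ^ (n - i) := by
        rw [mul_sum]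
        refine sum_congr rfl fun i hi => ?_
        rw [show -1 - t = -(t + 1) by ring, show -(t + 1) + 1 = -t by ring]
        linear_combination (-((n.choose i : ℝ) * p i)) *
          neg_one_pow_mul_neg_pow_mul_neg_pow (Nat.lt_succ_iff.mp (mem_range.mp hi)) (t + 1) t
    _ = _ := by rw [← sum_choose_mul_binomialTransform_mul_pow, hF']

/-- `G(t) = (−1)^n F(−1−t)`. -/
theorem stmt5 (n : ℕ) (p : ℕ → ℝ) (hp0 : ∀ k, 0 ≤ p k)
    (hp1 : ∑ k ∈ Finset.range (n + 1), (n.choose k : ℝ) * p k = 1)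
    (F : ℕ → ℝ) (hF : ∀ a, F a = ∑ k ∈ Finset.range (a + 1), (a.choose k : ℝ) * p k)
    (G : ℕ → ℝ)
    (hG : ∀ a, G a = ∑ k ∈ Finset.Icc a n, ((n - a).choose (k - a) : ℝ) * p k)
    (t : ℝ) :
    (∑ k ∈ Finset.range (n + 1), (n.choose k : ℝ) * G (n - k) * t ^ k)
      = (-1) ^ n * ∑ m ∈ Finset.range (n + 1), (n.choose m : ℝ) * F m * (-1 - t) ^ m :=
  stmt5_general n p F hF G hG t
end BinomialTransform
end

section
/- For an isotropic distribution on {0,1}^n, the second moment of the weight satisfies μ_2 = n[n − (2n−1) F_{n−1} + (n−1) F_{n−2}] = n[(n−1) G_2 + G_1]. -/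
/-!
Both formulas come from factorial moments. Summing `k ↦ (k)_a C(n,k) p_k` gives `(n)_a G_a`, and
summing `k ↦ (n-k)_j C(n,k) p_k` gives `(n)_j F_{n-j}`, because
`(k)_a C(n,k) = (n)_a C(n-a,k-a)` and `(n-k)_j C(n,k) = (n)_j C(n-j,k)`.
It remains to expand `k² = (k)_2 + (k)_1` and `k² = n² - (2n-1)(n-k)_1 + (n-k)_2`.
-/

open Finset

namespace Nat

theorem descFactorial_mul_choose {n k a : ℕ} (h : a ≤ k) :
    k.descFactorial a * n.choose k = n.descFactorial a * (n - a).choose (k - a) := by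
  rw [descFactorial_eq_factorial_mul_choose, descFactorial_eq_factorial_mul_choose, mul_assoc,
    mul_assoc, mul_comm (k.choose a), choose_mul h]

theorem descFactorial_sub_mul_choose {n k : ℕ} (j : ℕ) (h : k ≤ n) :
    (n - k).descFactorial j * n.choose k = n.descFactorial j * (n - j).choose k := by
  by_cases hj : j ≤ n - k
  · rw [← choose_symm h, descFactorial_mul_choose hj, show n - k - j = n - j - k by omega,
      choose_symm (by omega)]
  · rw [descFactorial_eq_zero_iff_lt.2 (by omega), zero_mul]
    rcases lt_or_ge n j with hn | hn
    · rw [descFactorial_eq_zero_iff_lt.2 hn, zero_mul]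
    · rw [choose_eq_zero_of_lt (by omega), mul_zero]

end Nat

section FactorialMoments

variable {R : Type*} [CommSemiring R]

theorem sum_descFactorial_mul_choose_mul (n a : ℕ) (p : ℕ → R) :
    ∑ k ∈ range (n + 1), (k.descFactorial a : R) * n.choose k * p k =
      n.descFactorial a * ∑ k ∈ Icc a n, ((n - a).choose (k - a) : R) * p k := by
  rw [mul_sum]
  refine (sum_subset (fun k hk => by grind) fun k hk hk' => ?_).symm.trans
    (sum_congr rfl fun k hk => ?_)
  · rw [Nat.descFactorial_eq_zero_iff_lt.2 (by grind), Nat.cast_zero, zero_mul, zero_mul]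
  · rw [← mul_assoc, ← Nat.cast_mul, ← Nat.cast_mul, Nat.descFactorial_mul_choose (by grind)]

theorem sum_descFactorial_sub_mul_choose_mul (n j : ℕ) (p : ℕ → R) :
    ∑ k ∈ range (n + 1), ((n - k).descFactorial j : R) * n.choose k * p k =
      n.descFactorial j * ∑ k ∈ range (n - j + 1), ((n - j).choose k : R) * p k := by
  rw [mul_sum]
  refine (sum_congr rfl fun k hk => ?_).trans
    (sum_subset (fun k hk => by grind) fun k hk hk' => ?_).symm
  · rw [← mul_assoc, ← Nat.cast_mul, ← Nat.cast_mul,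
      Nat.descFactorial_sub_mul_choose j (by grind)]
  · rw [Nat.choose_eq_zero_of_lt (by grind), Nat.cast_zero, zero_mul, mul_zero]

end FactorialMoments

theorem stmt10_general (n : ℕ) (p : ℕ → ℝ)
    (hp1 : ∑ k ∈ Finset.range (n + 1), (n.choose k : ℝ) * p k = 1)
    (F : ℕ → ℝ) (hF : ∀ a, F a = ∑ k ∈ Finset.range (a + 1), (a.choose k : ℝ) * p k)
    (G : ℕ → ℝ)
    (hG : ∀ a, G a = ∑ k ∈ Finset.Icc a n, ((n - a).choose (k - a) : ℝ) * p k)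
    (μ : ℕ → ℝ)
    (hμ : ∀ m, μ m = ∑ k ∈ Finset.range (n + 1), (k : ℝ) ^ m * (n.choose k : ℝ) * p k) :
    μ 2 = n * (n - (2 * n - 1) * F (n - 1) + (n - 1) * F (n - 2)) ∧
      μ 2 = n * ((n - 1) * G 2 + G 1) := by
  have hF_moment (j : ℕ) :
      ∑ k ∈ range (n + 1), ((n - k).descFactorial j : ℝ) * n.choose k * p k =
        n.descFactorial j * F (n - j) := by
    rw [hF]; exact sum_descFactorial_sub_mul_choose_mul n j p
  have hG_moment (a : ℕ) :
      ∑ k ∈ range (n + 1), (k.descFactorial a : ℝ) * n.choose k * p k =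
        n.descFactorial a * G a := by
    rw [hG]; exact sum_descFactorial_mul_choose_mul n a p
  have hsq_compl : ∀ k ∈ range (n + 1), (k : ℝ) ^ 2 * n.choose k * p k =
      (n : ℝ) ^ 2 * (n.choose k * p k)
        - (2 * n - 1) * ((n - k).descFactorial 1 * n.choose k * p k)
        + (n - k).descFactorial 2 * n.choose k * p k := by
    intro k hk
    rw [Nat.cast_descFactorial_two, Nat.descFactorial_one, Nat.cast_sub (by grind)]
    ring
  have hsq (k : ℕ) : (k : ℝ) ^ 2 * n.choose k * p k =
      k.descFactorial 2 * n.choose k * p k + k.descFactorial 1 * n.choose k * p k := by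
    rw [Nat.cast_descFactorial_two, Nat.descFactorial_one]
    ring
  constructor
  · rw [hμ, sum_congr rfl hsq_compl, sum_add_distrib, sum_sub_distrib, ← mul_sum, ← mul_sum,
      hp1, hF_moment, hF_moment, Nat.cast_descFactorial_two, Nat.descFactorial_one]
    ring
  · rw [hμ, sum_congr rfl fun k _ => hsq k, sum_add_distrib, hG_moment, hG_moment,
      Nat.cast_descFactorial_two, Nat.descFactorial_one]
    ring

/-- `μ₂ = n[n − (2n−1)F_{n−1} + (n−1)F_{n−2}] = n[(n−1)G₂ + G₁]`. -/
theorem stmt10 (n : ℕ) (hn : 2 ≤ n) (p : ℕ → ℝ) (hp0 : ∀ k, 0 ≤ p k)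
    (hp1 : ∑ k ∈ Finset.range (n + 1), (n.choose k : ℝ) * p k = 1)
    (F : ℕ → ℝ) (hF : ∀ a, F a = ∑ k ∈ Finset.range (a + 1), (a.choose k : ℝ) * p k)
    (G : ℕ → ℝ)
    (hG : ∀ a, G a = ∑ k ∈ Finset.Icc a n, ((n - a).choose (k - a) : ℝ) * p k)
    (μ : ℕ → ℝ)
    (hμ : ∀ m, μ m = ∑ k ∈ Finset.range (n + 1), (k : ℝ) ^ m * (n.choose k : ℝ) * p k) :
    μ 2 = n * (n - (2 * n - 1) * F (n - 1) + (n - 1) * F (n - 2)) ∧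
      μ 2 = n * ((n - 1) * G 2 + G 1) :=
  stmt10_general n p hp1 F hF G hG μ hμ
end

section
/- Under the hypotheses of the main theorem (i.i.d. isotropic code generation with coefficients F_a, source generating function Π), the expected weight of the target pattern is n[1 − Π(F_{n−1})] and its variance is n[Π(F_{n−1}) − n Π(F_{n−1})² + (n−1) Π(F_{n−2})]. -/
/-! The weight of a pattern `c` is `∑ i, (1 - [c vanishes at i])` and its square is a double sum
of `1 - [c vanishes at i] - [c vanishes at k] + [c vanishes on {i, k}]`. The superposition of the
independent code words selected by `β` vanishes on `S` iff each of the `wt β` words does, which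
has probability `(μ-mass of words vanishing on S) ^ wt β = F_{n-|S|} ^ wt β`. So the first two
moments given `β` are polynomials in `F_{n-1} ^ wt β` and `F_{n-2} ^ wt β`, and averaging over
`β` turns these powers into values of the generating function. -/

attribute [local instance] Classical.propDecidable

def Isotropic {n : ℕ} (μ : (Fin n → Bool) → ℝ) : Prop :=
  ∀ (σ : Equiv.Perm (Fin n)) (α : Fin n → Bool), μ (α ∘ σ) = μ α

def wt {N : ℕ} (β : Fin N → Bool) : ℕ :=
  (Finset.univ.filter (fun i => β i = true)).card

noncomputable def superpose {N n : ℕ} (β : Fin N → Bool)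
    (ω : Fin N → (Fin n → Bool)) : Fin n → Bool :=
  (Finset.univ.filter (fun j => β j = true)).sup ω

open Finset

section ProductWeights

variable {ι X : Type*} [Fintype ι] [DecidableEq ι] [Fintype X]

theorem sum_prod_mul_boole_forall_mem (μ : X → ℝ) (hμ : ∑ x, μ x = 1) (s : Finset ι)
    (p : X → Prop) [DecidablePred p] :
    ∑ ω : ι → X, (∏ j, μ (ω j)) * (if ∀ j ∈ s, p (ω j) then 1 else 0)
      = (∑ x with p x, μ x) ^ #s := by
  have hfactor : ∀ ω : ι → X, (∏ j, μ (ω j)) * (if ∀ j ∈ s, p (ω j) then 1 else 0)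
      = ∏ j, μ (ω j) * (if j ∈ s then (if p (ω j) then 1 else 0) else 1) := by
    intro ω
    rw [prod_mul_distrib, prod_ite_mem, univ_inter, prod_boole]
    congr
  simp_rw [hfactor]
  rw [← Fintype.prod_sum (fun j x => μ x * if j ∈ s then (if p x then 1 else 0) else 1)]
  have hfactor_sum : ∀ j, ∑ x, μ x * (if j ∈ s then (if p x then 1 else 0) else 1)
      = if j ∈ s then ∑ x with p x, μ x else 1 := by
    intro j
    split_ifs <;> simp [sum_filter, hμ]
  simp_rw [hfactor_sum, prod_ite_mem, univ_inter, prod_const]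

theorem sum_prod_eq_one (μ : X → ℝ) (hμ : ∑ x, μ x = 1) : ∑ ω : ι → X, ∏ j, μ (ω j) = 1 := by
  rw [← Fintype.prod_sum (fun _ x => μ x), hμ, prod_const_one]

end ProductWeights

section Patterns

variable {N n : ℕ}

def zeroOnMass (μ : (Fin n → Bool) → ℝ) (S : Finset (Fin n)) : ℝ :=
  ∑ c with ∀ i ∈ S, c i = false, μ c

def zeroOnIndicator (S : Finset (Fin n)) (c : Fin n → Bool) : ℝ :=
  if ∀ i ∈ S, c i = false then 1 else 0

theorem zeroOnIndicator_mul (S T : Finset (Fin n)) (c : Fin n → Bool) :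
    zeroOnIndicator S c * zeroOnIndicator T c = zeroOnIndicator (S ∪ T) c := by
  simp only [zeroOnIndicator, forall_mem_union]
  split_ifs <;> simp_all

theorem wt_eq_sum_one_sub_zeroOnIndicator (c : Fin n → Bool) :
    (wt c : ℝ) = ∑ i, (1 - zeroOnIndicator {i} c) := by
  rw [wt, card_filter, Nat.cast_sum]
  refine sum_congr rfl fun i _ => ?_
  cases h : c i <;> simp [zeroOnIndicator, h]

theorem wt_sq_eq_sum_zeroOnIndicator (c : Fin n → Bool) :
    (wt c : ℝ) ^ 2 = ∑ i, ∑ k,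
      (1 - zeroOnIndicator {i} c - zeroOnIndicator {k} c + zeroOnIndicator {i, k} c) := by
  rw [wt_eq_sum_one_sub_zeroOnIndicator, sq, sum_mul_sum]
  refine sum_congr rfl fun i _ => sum_congr rfl fun k _ => ?_
  rw [show ({i, k} : Finset (Fin n)) = {i} ∪ {k} from insert_eq i {k}, ← zeroOnIndicator_mul]
  ring

theorem superpose_eq_false_iff (β : Fin N → Bool) (ω : Fin N → Fin n → Bool) (i : Fin n) :
    superpose β ω i = false ↔ ∀ j, β j = true → ω j i = false := by
  rw [superpose, Finset.sup_apply, show false = (⊥ : Bool) from rfl, Finset.sup_eq_bot_iff]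
  simp

theorem sum_prod_mul_zeroOnIndicator_superpose (μ : (Fin n → Bool) → ℝ) (hμ : ∑ c, μ c = 1)
    (β : Fin N → Bool) (S : Finset (Fin n)) :
    ∑ ω : Fin N → Fin n → Bool, (∏ j, μ (ω j)) * zeroOnIndicator S (superpose β ω)
      = zeroOnMass μ S ^ wt β := by
  rw [wt, zeroOnMass, ← sum_prod_mul_boole_forall_mem μ hμ]
  refine sum_congr rfl fun ω _ => ?_
  simp only [zeroOnIndicator, superpose_eq_false_iff, mem_filter, mem_univ, true_and]
  congr 2
  exact propext ⟨fun h j hj i hi => h i hi j hj, fun h i hi j hj => h j hj i hi⟩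

theorem zeroOnMass_eq_of_wt_eq (μ : (Fin n → Bool) → ℝ) (F : ℕ → ℝ)
    (hF : ∀ α : Fin n → Bool, F (wt α) = ∑ c : Fin n → Bool, if c ≤ α then μ c else 0)
    (S : Finset (Fin n)) :
    zeroOnMass μ S = F (n - #S) := by
  have hwt : wt (fun i => decide (i ∉ S)) = n - #S := by
    rw [wt, show univ.filter (fun i => decide (i ∉ S) = true) = Sᶜ by ext; simp, card_compl,
      Fintype.card_fin]
  rw [zeroOnMass, ← hwt, hF, sum_filter]
  refine sum_congr rfl fun c _ => if_congr ?_ rfl rfl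
  refine ⟨fun h i => ?_, fun h i hi => le_bot_iff.mp (by simpa [hi] using h i)⟩
  by_cases hi : i ∈ S <;> simp [hi, h]

theorem sum_sum_card_pair (g : ℕ → ℝ) :
    ∑ i : Fin n, ∑ k : Fin n, g #{i, k} = n * g 1 + n * (n - 1) * g 2 := by
  have hrow : ∀ i : Fin n, ∑ k : Fin n, g #{i, k} = g 1 + (n - 1) * g 2 := by
    intro i
    have hpair : ∀ k, g #{i, k} = g 2 + if i = k then g 1 - g 2 else 0 := by
      intro k
      by_cases hik : i = k
      · simp [hik]
      · simp [hik, card_pair hik]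
    simp only [hpair, sum_add_distrib, sum_const, card_univ, Fintype.card_fin, nsmul_eq_mul,
      sum_ite_eq, mem_univ, if_true]
    ring
  simp only [hrow, sum_const, card_univ, Fintype.card_fin, nsmul_eq_mul]
  ring

theorem sum_prod_mul_wt_superpose (μ : (Fin n → Bool) → ℝ) (hμ : ∑ c, μ c = 1)
    (β : Fin N → Bool) :
    ∑ ω : Fin N → Fin n → Bool, (∏ j, μ (ω j)) * (wt (superpose β ω) : ℝ)
      = ∑ i, (1 - zeroOnMass μ {i} ^ wt β) := by
  simp_rw [wt_eq_sum_one_sub_zeroOnIndicator, mul_sum, mul_sub, mul_one]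
  rw [sum_comm]
  simp_rw [sum_sub_distrib, sum_prod_eq_one μ hμ, sum_prod_mul_zeroOnIndicator_superpose μ hμ]

theorem sum_prod_mul_wt_sq_superpose (μ : (Fin n → Bool) → ℝ) (hμ : ∑ c, μ c = 1)
    (β : Fin N → Bool) :
    ∑ ω : Fin N → Fin n → Bool, (∏ j, μ (ω j)) * (wt (superpose β ω) : ℝ) ^ 2
      = ∑ i, ∑ k, (1 - zeroOnMass μ {i} ^ wt β - zeroOnMass μ {k} ^ wt β
          + zeroOnMass μ {i, k} ^ wt β) := by
  simp_rw [wt_sq_eq_sum_zeroOnIndicator, mul_sum, mul_add, mul_sub, mul_one]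
  rw [sum_comm]
  refine sum_congr rfl fun i _ => ?_
  rw [sum_comm]
  simp_rw [sum_add_distrib, sum_sub_distrib, sum_prod_eq_one μ hμ,
    sum_prod_mul_zeroOnIndicator_superpose μ hμ]

end Patterns

theorem stmt15_general {N n : ℕ} (μ : (Fin n → Bool) → ℝ)
    (hμ1 : ∑ c, μ c = 1)
    (P : (Fin N → Bool) → ℝ) (hP1 : ∑ β, P β = 1)
    (F : ℕ → ℝ)
    (hF : ∀ α : Fin n → Bool, F (wt α) = ∑ c : Fin n → Bool, if c ≤ α then μ c else 0)
    (PGF : ℝ → ℝ) (hPGF : ∀ t, PGF t = ∑ β : Fin N → Bool, P β * t ^ wt β)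
    (E V : ℝ)
    (hE : E = ∑ β : Fin N → Bool, ∑ ω : Fin N → (Fin n → Bool),
        P β * (∏ j, μ (ω j)) * (wt (superpose β ω) : ℝ))
    (hV : V = (∑ β : Fin N → Bool, ∑ ω : Fin N → (Fin n → Bool),
        P β * (∏ j, μ (ω j)) * (wt (superpose β ω) : ℝ) ^ 2) - E ^ 2) :
    E = n * (1 - PGF (F (n - 1))) ∧
      V = n * (PGF (F (n - 1)) - n * PGF (F (n - 1)) ^ 2 + (n - 1) * PGF (F (n - 2))) := by
  have hmass := zeroOnMass_eq_of_wt_eq μ F hF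
  have hmean : E = n * (1 - PGF (F (n - 1))) := calc
    E = ∑ β, (n * P β - n * (P β * F (n - 1) ^ wt β)) := by
      simp_rw [hE, mul_assoc, ← mul_sum, sum_prod_mul_wt_superpose μ hμ1, hmass, card_singleton,
        sum_const, card_univ, Fintype.card_fin, nsmul_eq_mul]
      exact sum_congr rfl fun β _ => by ring
    _ = n * (1 - PGF (F (n - 1))) := by
      rw [sum_sub_distrib, ← mul_sum, ← mul_sum, hP1, hPGF]
      ring
  have hsecond : ∑ β : Fin N → Bool, ∑ ω : Fin N → (Fin n → Bool),
      P β * (∏ j, μ (ω j)) * (wt (superpose β ω) : ℝ) ^ 2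
      = n * n + (n - 2 * n * n) * PGF (F (n - 1)) + (n * n - n) * PGF (F (n - 2)) := calc
    _ = ∑ β, (n * n * P β + (n - 2 * n * n) * (P β * F (n - 1) ^ wt β)
          + (n * n - n) * (P β * F (n - 2) ^ wt β)) := by
      simp_rw [mul_assoc, ← mul_sum, sum_prod_mul_wt_sq_superpose μ hμ1, hmass, card_singleton]
      refine sum_congr rfl fun β _ => ?_
      rw [sum_sum_card_pair fun m => 1 - F (n - 1) ^ wt β - F (n - 1) ^ wt β + F (n - m) ^ wt β]
      ring
    _ = _ := by
      rw [sum_add_distrib, sum_add_distrib, ← mul_sum, ← mul_sum, ← mul_sum, hP1, hPGF, hPGF]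
      ring
  exact ⟨hmean, by rw [hV, hsecond, hmean]; ring⟩

/-- with i.i.d. isotropic code generation (coefficients `F_a`)
and source generating function `PGF`, the expected weight of the target
pattern is `n[1 − PGF(F_{n−1})]` and its variance is
`n[PGF(F_{n−1}) − n PGF(F_{n−1})² + (n−1) PGF(F_{n−2})]`. -/
theorem stmt15 {N n : ℕ} (hn : 2 ≤ n) (μ : (Fin n → Bool) → ℝ)
    (hμ0 : ∀ c, 0 ≤ μ c) (hμ1 : ∑ c, μ c = 1) (hiso : Isotropic μ)
    (P : (Fin N → Bool) → ℝ) (hP0 : ∀ β, 0 ≤ P β) (hP1 : ∑ β, P β = 1)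
    (F : ℕ → ℝ)
    (hF : ∀ α : Fin n → Bool, F (wt α) = ∑ c : Fin n → Bool, if c ≤ α then μ c else 0)
    (PGF : ℝ → ℝ) (hPGF : ∀ t, PGF t = ∑ β : Fin N → Bool, P β * t ^ wt β)
    (E V : ℝ)
    (hE : E = ∑ β : Fin N → Bool, ∑ ω : Fin N → (Fin n → Bool),
        P β * (∏ j, μ (ω j)) * (wt (superpose β ω) : ℝ))
    (hV : V = (∑ β : Fin N → Bool, ∑ ω : Fin N → (Fin n → Bool),
        P β * (∏ j, μ (ω j)) * (wt (superpose β ω) : ℝ) ^ 2) - E ^ 2) :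
    E = n * (1 - PGF (F (n - 1))) ∧
      V = n * (PGF (F (n - 1)) - n * PGF (F (n - 1)) ^ 2 + (n - 1) * PGF (F (n - 2))) :=
  stmt15_general μ hμ1 P hP1 F hF PGF hPGF E V hE hV
end

section
/- With source words of weight r and query words of weight s encoded by the same binomial superimposed coding scheme with parameter q, the expected proportion of false drops is θ = Σ_{m=0}^n C(n,m) Ǧ_m p̃_m = [(1−q^r)(1−q^s) + q^s]^n, where Ǧ_m = (1−q^r)^m and p̃_m = (1−q^s)^m q^{s(n−m)}; moreover θ is minimized over q at q^s = r/(r+s), giving θ = [1 − (r/(r+s))^{r/s} · s/(r+s)]^n. -/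
/-!
Expanding `((1 - q^r)(1 - q^s) + q^s)^n` by the binomial theorem gives the sum. Since
`(1 - q^r)(1 - q^s) + q^s = 1 - q^r (1 - q^s)`, minimizing `θ` means maximizing
`q^r (1 - q^s)`, whose `s`-th power is `u^r (1 - u)^s` with `u = q^s`; by weighted AM-GM this
is largest at `u = r/(r+s)`.
-/

open Real

lemma rpow_mul_one_sub_rpow_le {w₁ w₂ u : ℝ} (hw₁ : 0 < w₁) (hw₂ : 0 < w₂) (hw : w₁ + w₂ = 1)
    (hu₀ : 0 ≤ u) (hu₁ : u ≤ 1) :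
    u ^ w₁ * (1 - u) ^ w₂ ≤ w₁ ^ w₁ * w₂ ^ w₂ := by
  have hv₀ : 0 ≤ 1 - u := sub_nonneg.2 hu₁
  -- AM-GM for `u / w₁` and `(1 - u) / w₂`, whose weighted arithmetic mean is `1`
  have key := geom_mean_le_arith_mean2_weighted hw₁.le hw₂.le
    (div_nonneg hu₀ hw₁.le) (div_nonneg hv₀ hw₂.le) hw
  rw [mul_div_cancel₀ _ hw₁.ne', mul_div_cancel₀ _ hw₂.ne', add_sub_cancel,
    div_rpow hu₀ hw₁.le, div_rpow hv₀ hw₂.le, div_mul_div_comm,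
    div_le_one (by positivity)] at key
  exact key

lemma pow_mul_one_sub_pow_le {r s : ℕ} (hr : 0 < r) (hs : 0 < s) {u : ℝ} (hu₀ : 0 ≤ u)
    (hu₁ : u ≤ 1) :
    u ^ r * (1 - u) ^ s ≤ ((r : ℝ) / (r + s)) ^ r * ((s : ℝ) / (r + s)) ^ s := by
  have hrs : (0 : ℝ) < r + s := by positivity
  have key := rpow_mul_one_sub_rpow_le (w₁ := r / (r + s)) (w₂ := s / (r + s))
    (by positivity) (by positivity) (by field_simp) hu₀ hu₁
  have hpow := pow_le_pow_left₀ (by positivity) key (r + s)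
  have hexp (x : ℝ) (hx : 0 ≤ x) (k : ℕ) : (x ^ ((k : ℝ) / (r + s))) ^ (r + s) = x ^ k := by
    rw [← rpow_natCast _ (r + s), ← rpow_mul hx, Nat.cast_add, div_mul_cancel₀ _ hrs.ne',
      rpow_natCast]
  rwa [mul_pow, mul_pow, hexp _ hu₀, hexp _ (sub_nonneg.2 hu₁), hexp _ (by positivity),
    hexp _ (by positivity)] at hpow

lemma pow_mul_one_sub_pow_le_of_pow_eq {r s : ℕ} (hr : 0 < r) (hs : 0 < s) {q q₀ : ℝ}
    (hq : 0 ≤ q) (hq1 : q ≤ 1) (hq₀ : 0 ≤ q₀) (hq₀s : q₀ ^ s = (r : ℝ) / (r + s)) :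
    q ^ r * (1 - q ^ s) ≤ q₀ ^ r * (1 - q₀ ^ s) := by
  have h₀ : 1 - q₀ ^ s = (s : ℝ) / (r + s) := by
    rw [hq₀s, one_sub_div (by positivity), add_sub_cancel_left]
  have hpow_s (x : ℝ) : (x ^ r * (1 - x ^ s)) ^ s = (x ^ s) ^ r * (1 - x ^ s) ^ s := by
    rw [mul_pow, ← pow_mul, ← pow_mul, Nat.mul_comm]
  refine (pow_le_pow_iff_left₀ ?_ ?_ hs.ne').1 ?_
  · exact mul_nonneg (by positivity) (sub_nonneg.2 (pow_le_one₀ hq hq1))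
  · rw [h₀]; positivity
  · rw [hpow_s, hpow_s, h₀, hq₀s]
    exact pow_mul_one_sub_pow_le hr hs (by positivity) (pow_le_one₀ hq hq1)

lemma pow_eq_pow_rpow_div {x : ℝ} (hx : 0 ≤ x) (r : ℕ) {s : ℕ} (hs : s ≠ 0) :
    x ^ r = (x ^ s) ^ ((r : ℝ) / s) := by
  rw [← rpow_natCast x s, ← rpow_mul hx, mul_div_cancel₀ _ (by exact_mod_cast hs), rpow_natCast]

theorem stmt17_general (n r s : ℕ) (hr : 0 < r) (hs : 0 < s)
    (θ : ℝ → ℝ)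
    (hθ : ∀ q, θ q = ((1 - q ^ r) * (1 - q ^ s) + q ^ s) ^ n)
    (q₀ : ℝ) (hq₀0 : 0 < q₀) (hq₀1 : q₀ < 1)
    (hq₀ : q₀ ^ s = (r : ℝ) / (r + s)) :
    (∀ q : ℝ,
      (∑ m ∈ Finset.range (n + 1), (n.choose m : ℝ) * (1 - q ^ r) ^ m *
          ((1 - q ^ s) ^ m * q ^ (s * (n - m))))
        = θ q) ∧
    θ q₀ = (1 - ((r : ℝ) / (r + s)) ^ ((r : ℝ) / (s : ℝ)) * ((s : ℝ) / (r + s))) ^ n ∧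
    (∀ q : ℝ, 0 < q → q < 1 → θ q₀ ≤ θ q) := by
  have hbase (q : ℝ) : (1 - q ^ r) * (1 - q ^ s) + q ^ s = 1 - q ^ r * (1 - q ^ s) := by ring
  refine ⟨fun q => ?_, ?_, fun q hq hq1 => ?_⟩
  · rw [hθ, add_pow]
    refine Finset.sum_congr rfl fun m _ => ?_
    rw [pow_mul, mul_pow]
    ring
  · have h₁ : 1 - q₀ ^ s = (s : ℝ) / (r + s) := by
      rw [hq₀, one_sub_div (by positivity), add_sub_cancel_left]
    rw [hθ, hbase, h₁, pow_eq_pow_rpow_div hq₀0.le r hs.ne', hq₀]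
  · have hmax := pow_mul_one_sub_pow_le_of_pow_eq hr hs hq.le hq1.le hq₀0.le hq₀
    rw [hθ, hθ, hbase, hbase]
    refine pow_le_pow_left₀ (sub_nonneg.2 ?_) (by linarith) n
    exact mul_le_one₀ (pow_le_one₀ hq₀0.le hq₀1.le)
      (sub_nonneg.2 (pow_le_one₀ hq₀0.le hq₀1.le)) (sub_le_self _ (by positivity))

/-- the expected proportion of false drops is
`θ(q) = Σ_m C(n,m) (1−q^r)^m (1−q^s)^m q^{s(n−m)} = [(1−q^r)(1−q^s)+q^s]^n`,
and `θ` is minimized over `q ∈ (0,1)` at the value `q₀` with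
`q₀^s = r/(r+s)`, where
`θ(q₀) = [1 − (r/(r+s))^{r/s} · s/(r+s)]^n`. -/
theorem stmt17 (n r s : ℕ) (hn : 0 < n) (hr : 0 < r) (hs : 0 < s)
    (θ : ℝ → ℝ)
    (hθ : ∀ q, θ q = ((1 - q ^ r) * (1 - q ^ s) + q ^ s) ^ n)
    (q₀ : ℝ) (hq₀0 : 0 < q₀) (hq₀1 : q₀ < 1)
    (hq₀ : q₀ ^ s = (r : ℝ) / (r + s)) :
    (∀ q : ℝ,
      (∑ m ∈ Finset.range (n + 1), (n.choose m : ℝ) * (1 - q ^ r) ^ m *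
          ((1 - q ^ s) ^ m * q ^ (s * (n - m))))
        = θ q) ∧
    θ q₀ = (1 - ((r : ℝ) / (r + s)) ^ ((r : ℝ) / (s : ℝ)) * ((s : ℝ) / (r + s))) ^ n ∧
    (∀ q : ℝ, 0 < q → q < 1 → θ q₀ ≤ θ q) :=
  stmt17_general n r s hr hs θ hθ q₀ hq₀0 hq₀1 hq₀
end

section
/- If the source bits are independent with bit j equal to 1 with probability p_j, and code word ψ_j has isotropic distribution with coefficients F^{(j)}_a, then the target coefficients satisfy F̌_a = ∏_{j=1}^N (p_j F^{(j)}_a + 1 − p_j). -/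
attribute [local instance] Classical.propDecidable

/-!
The event `superpose β ω ≤ α` is the conjunction over `j` of the events "`β j = false` or
`ω j ≤ α`", so the joint weight of `(β, ω)` restricted to it factorizes over `j`. Summing a
product of independent factors over all `(β, ω)` gives the product of the one-coordinate sums,
and the `j`-th of these is `p_j F^{(j)}_a + (1 - p_j) ∑_c μ_j(c) = p_j F^{(j)}_a + 1 - p_j`.
-/

theorem superpose_le_iff {N n : ℕ} (β : Fin N → Bool) (ω : Fin N → Fin n → Bool)
    (α : Fin n → Bool) : superpose β ω ≤ α ↔ ∀ j, β j = true → ω j ≤ α := by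
  simp [superpose, Finset.sup_le_iff]

theorem sum_sum_prod_apply_apply {ι A B R : Type*} [Fintype ι] [DecidableEq ι] [Fintype A]
    [Fintype B] [CommSemiring R] (g : ι → A → B → R) :
    ∑ x : ι → A, ∑ y : ι → B, ∏ i, g i (x i) (y i) = ∏ i, ∑ a, ∑ b, g i a b := by
  simp only [Fintype.prod_sum]

section

variable {R : Type*} [CommRing R] {N n : ℕ}

theorem ite_superpose_le_eq_prod (p : Fin N → R) (μ : Fin N → (Fin n → Bool) → R)
    (α : Fin n → Bool) (β : Fin N → Bool) (ω : Fin N → Fin n → Bool) :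
    (if superpose β ω ≤ α then (∏ j, if β j then p j else 1 - p j) * ∏ j, μ j (ω j) else 0)
      = ∏ j, if β j then p j * (if ω j ≤ α then μ j (ω j) else 0)
          else (1 - p j) * μ j (ω j) := by
  by_cases h : superpose β ω ≤ α
  · rw [if_pos h, ← Finset.prod_mul_distrib]
    refine Finset.prod_congr rfl fun j _ => ?_
    cases hb : β j
    · rfl
    · rw [if_pos ((superpose_le_iff β ω α).mp h j hb)]
      rfl
  · obtain ⟨j, hb, hω⟩ : ∃ j, β j = true ∧ ¬ω j ≤ α := by
      simpa [superpose_le_iff] using h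
    rw [if_neg h, eq_comm]
    exact Finset.prod_eq_zero (Finset.mem_univ j) (by simp [hb, hω])

theorem sum_bool_sum_ite_mul (p : R) (ν : (Fin n → Bool) → R) (hν : ∑ c, ν c = 1)
    (α : Fin n → Bool) :
    ∑ b : Bool, ∑ c : Fin n → Bool,
        (if b then p * (if c ≤ α then ν c else 0) else (1 - p) * ν c)
      = p * (∑ c : Fin n → Bool, if c ≤ α then ν c else 0) + 1 - p := by
  simp only [Fintype.sum_bool, if_true, Bool.false_eq_true, if_false, ← Finset.mul_sum, hν]
  ring

end

theorem stmt18_general {N n : ℕ} (p : Fin N → ℝ)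
    (μ : Fin N → (Fin n → Bool) → ℝ)
    (hμ1 : ∀ j, ∑ c, μ j c = 1)
    (α : Fin n → Bool) :
    (∑ β : Fin N → Bool, ∑ ω : Fin N → (Fin n → Bool),
        if superpose β ω ≤ α then
          (∏ j, if β j then p j else 1 - p j) * ∏ j, μ j (ω j)
        else 0)
      = ∏ j, (p j * (∑ c : Fin n → Bool, if c ≤ α then μ j c else 0) + 1 - p j) := by
  simp only [ite_superpose_le_eq_prod, sum_sum_prod_apply_apply
    (fun j (b : Bool) (c : Fin n → Bool) =>
      if b then p j * (if c ≤ α then μ j c else 0) else (1 - p j) * μ j c)]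
  exact Finset.prod_congr rfl fun j _ => sum_bool_sum_ite_mul (p j) (μ j) (hμ1 j) α

/-- with independent source bits (bit `j` on with probability
`p j`) and independent isotropic code words `ψ_j`, the target coefficients
satisfy `F̌_a = ∏_j (p_j F^{(j)}_a + 1 − p_j)`. -/
theorem stmt18 {N n : ℕ} (p : Fin N → ℝ) (hp0 : ∀ j, 0 ≤ p j) (hp1 : ∀ j, p j ≤ 1)
    (μ : Fin N → (Fin n → Bool) → ℝ)
    (hμ0 : ∀ j c, 0 ≤ μ j c) (hμ1 : ∀ j, ∑ c, μ j c = 1)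
    (hiso : ∀ j, Isotropic (μ j))
    (α : Fin n → Bool) :
    (∑ β : Fin N → Bool, ∑ ω : Fin N → (Fin n → Bool),
        if superpose β ω ≤ α then
          (∏ j, if β j then p j else 1 - p j) * ∏ j, μ j (ω j)
        else 0)
      = ∏ j, (p j * (∑ c : Fin n → Bool, if c ≤ α then μ j c else 0) + 1 - p j) :=
  stmt18_general p μ hμ1 α
end

section
/- Among isotropic distributions on {0,1}^n with a prescribed value of F_{n−1} of the form (n−w)/n for an integer 0 ≤ w ≤ n, the fixed-weight-w distribution achieves equality in the bound F_{n−2} ≥ (n−1)^{−1}(n F_{n−1} − 1) F_{n−1}, i.e., it has the minimal possible F_{n−2} (equivalently, minimal weight variance, namely zero). -/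
/-!
Write `F_a = ∑ₖ C(a,k) pₖ` and `N = m + 2`. The identities `(N - k) C(N,k) = N C(N-1,k)` and
`(N - k)(N - 1 - k) C(N,k) = N (N-1) C(N-2,k)` express the second moment of the weight about any
point `x` through `F_N, F_{N-1}, F_{N-2}`; about the mean weight `N (1 - F_{N-1})` it is the
variance `N [F_{N-1} - N F_{N-1}² + (N-1) F_{N-2}] ≥ 0`, which is the lower bound on `F_{N-2}`.
For the fixed-weight-`w` distribution `F_a = C(a,w) / C(N,w)`, and the same identities give
`F_{N-1} = (N-w)/N` and `F_{N-2} = (N-w)(N-1-w) / (N(N-1))`, which attains the bound.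
-/

open Finset

noncomputable section

def binomialSum (p : ℕ → ℝ) (a : ℕ) : ℝ := ∑ k ∈ range (a + 1), (a.choose k : ℝ) * p k

def fixedWeight (n w : ℕ) : ℕ → ℝ := fun m => if m = w then ((n.choose w : ℝ))⁻¹ else 0

end

theorem cast_choose_succ_mul {R : Type*} [CommRing R] (n k : ℕ) :
    ((n : R) + 1 - k) * ((n + 1).choose k : R) = ((n : R) + 1) * (n.choose k : R) := by
  rcases le_or_gt k (n + 1) with hk | hk
  · have h := congrArg (Nat.cast (R := R)) (Nat.choose_mul_succ_eq n k)
    push_cast [Nat.cast_sub hk] at h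
    linear_combination -h
  · rw [Nat.choose_eq_zero_of_lt hk, Nat.choose_eq_zero_of_lt (by omega)]
    simp

theorem cast_choose_mul_sq_sub (m k : ℕ) (x : ℝ) :
    ((m + 2).choose k : ℝ) * (x - k) ^ 2 =
      ((m : ℝ) + 2) * (m + 1) * (m.choose k : ℝ)
        + (1 - 2 * (m + 2 - x)) * (m + 2) * ((m + 1).choose k : ℝ)
        + (m + 2 - x) ^ 2 * ((m + 2).choose k : ℝ) := by
  have h₁ := cast_choose_succ_mul (R := ℝ) (m + 1) k
  push_cast at h₁
  linear_combination ((m : ℝ) + 2 - k - 2 * (m + 2 - x)) * h₁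
    + ((m : ℝ) + 2) * cast_choose_succ_mul (R := ℝ) m k

theorem binomialSum_eq_sum_range (p : ℕ → ℝ) {a b : ℕ} (hab : a < b) :
    binomialSum p a = ∑ k ∈ range b, (a.choose k : ℝ) * p k := by
  refine sum_subset (range_subset_range.mpr hab) fun k _ hk => ?_
  rw [Nat.choose_eq_zero_of_lt (by simpa using hk)]
  simp

theorem sum_choose_mul_sq_sub (p : ℕ → ℝ) (m : ℕ) (x : ℝ) :
    ∑ k ∈ range (m + 3), ((m + 2).choose k : ℝ) * p k * (x - k) ^ 2 =
      ((m : ℝ) + 2) * (m + 1) * binomialSum p m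
        + (1 - 2 * (m + 2 - x)) * (m + 2) * binomialSum p (m + 1)
        + (m + 2 - x) ^ 2 * binomialSum p (m + 2) := by
  rw [binomialSum_eq_sum_range p (by omega : m < m + 3),
    binomialSum_eq_sum_range p (by omega : m + 1 < m + 3),
    binomialSum_eq_sum_range p (by omega : m + 2 < m + 3), mul_sum, mul_sum, mul_sum,
    ← sum_add_distrib, ← sum_add_distrib]
  refine sum_congr rfl fun k _ => ?_
  linear_combination p k * cast_choose_mul_sq_sub m k x

theorem weight_variance_nonneg {p : ℕ → ℝ} (hp : ∀ k, 0 ≤ p k) (m : ℕ)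
    (hsum : binomialSum p (m + 2) = 1) :
    0 ≤ ((m : ℝ) + 2) * (binomialSum p (m + 1) - (m + 2) * binomialSum p (m + 1) ^ 2
      + (m + 1) * binomialSum p m) := by
  have h := sum_choose_mul_sq_sub p m ((m + 2) * (1 - binomialSum p (m + 1)))
  rw [hsum] at h
  have hnonneg : 0 ≤ ∑ k ∈ range (m + 3), ((m + 2).choose k : ℝ) * p k
      * ((m + 2) * (1 - binomialSum p (m + 1)) - k) ^ 2 :=
    sum_nonneg fun k _ => mul_nonneg (mul_nonneg (Nat.cast_nonneg _) (hp k)) (sq_nonneg _)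
  linear_combination hnonneg + h

theorem binomialSum_lower_bound {p : ℕ → ℝ} (hp : ∀ k, 0 ≤ p k) (m : ℕ)
    (hsum : binomialSum p (m + 2) = 1) :
    ((m : ℝ) + 1)⁻¹ * ((m + 2) * binomialSum p (m + 1) - 1) * binomialSum p (m + 1)
      ≤ binomialSum p m := by
  have h := weight_variance_nonneg hp m hsum
  rw [mul_assoc, inv_mul_le_iff₀ (by positivity)]
  nlinarith

theorem binomialSum_fixedWeight (n w a : ℕ) :
    binomialSum (fixedWeight n w) a = (a.choose w : ℝ) / n.choose w := by
  simp only [binomialSum, fixedWeight, mul_ite, mul_zero, sum_ite_eq', mem_range, div_eq_mul_inv]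
  split_ifs with h
  · rfl
  · rw [Nat.choose_eq_zero_of_lt (by omega)]
    simp

theorem binomialSum_fixedWeight_pred {n w : ℕ} (hw : w ≤ n + 1) :
    binomialSum (fixedWeight (n + 1) w) n = ((n : ℝ) + 1 - w) / (n + 1) := by
  have hpos : (0 : ℝ) < (n + 1).choose w := by exact_mod_cast Nat.choose_pos hw
  rw [binomialSum_fixedWeight, div_eq_div_iff hpos.ne' (by positivity)]
  linear_combination -cast_choose_succ_mul (R := ℝ) n w

theorem binomialSum_fixedWeight_pred_pred {n w : ℕ} (hw : w ≤ n + 2) :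
    binomialSum (fixedWeight (n + 2) w) n
      = ((n : ℝ) + 2 - w) * (n + 1 - w) / ((n + 2) * (n + 1)) := by
  have hpos : (0 : ℝ) < (n + 2).choose w := by exact_mod_cast Nat.choose_pos hw
  have h₁ := cast_choose_succ_mul (R := ℝ) (n + 1) w
  push_cast at h₁
  rw [binomialSum_fixedWeight, div_eq_div_iff hpos.ne' (by positivity)]
  linear_combination (-(n : ℝ) - 1 + w) * h₁ - (n + 2) * cast_choose_succ_mul (R := ℝ) n w

/-- among isotropic distributions on `{0,1}^n` with prescribed
`F_{n−1} = (n−w)/n`, the fixed-weight-`w` distribution achieves equality in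
`F_{n−2} ≥ (n−1)⁻¹ (n F_{n−1} − 1) F_{n−1}` — it has the minimal possible
`F_{n−2}` — and its weight variance `n[F_{n−1} − n F_{n−1}² + (n−1)F_{n−2}]`
is zero. -/
theorem stmt19 (n w : ℕ) (hn : 2 ≤ n) (hw : w ≤ n)
    (p : ℕ → ℝ) (hp : ∀ m, p m = if m = w then ((n.choose w : ℝ))⁻¹ else 0)
    (F : ℕ → ℝ) (hF : ∀ a, F a = ∑ k ∈ Finset.range (a + 1), (a.choose k : ℝ) * p k) :
    F (n - 1) = ((n : ℝ) - w) / n ∧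
    F (n - 2) = ((n : ℝ) - 1)⁻¹ * (n * F (n - 1) - 1) * F (n - 1) ∧
    n * (F (n - 1) - n * F (n - 1) ^ 2 + ((n : ℝ) - 1) * F (n - 2)) = 0 ∧
    (∀ p' : ℕ → ℝ, (∀ k, 0 ≤ p' k) →
      (∑ k ∈ Finset.range (n + 1), (n.choose k : ℝ) * p' k) = 1 →
      (∑ k ∈ Finset.range (n - 1 + 1), ((n - 1).choose k : ℝ) * p' k) = F (n - 1) →
      F (n - 2) ≤ ∑ k ∈ Finset.range (n - 2 + 1), ((n - 2).choose k : ℝ) * p' k) := by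
  obtain ⟨m, rfl⟩ : ∃ m, n = m + 2 := ⟨n - 2, by omega⟩
  obtain rfl : p = fixedWeight (m + 2) w := funext hp
  obtain rfl : F = binomialSum (fixedWeight (m + 2) w) := funext hF
  simp only [show m + 2 - 1 = m + 1 from rfl, Nat.add_sub_cancel]
  push_cast
  rw [show (m : ℝ) + 2 - 1 = m + 1 by ring]
  set S₁ := binomialSum (fixedWeight (m + 2) w) (m + 1)
  set S₂ := binomialSum (fixedWeight (m + 2) w) m
  have hS₁ : S₁ = ((m : ℝ) + 2 - w) / (m + 2) := by
    convert binomialSum_fixedWeight_pred (n := m + 1) hw using 1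
    push_cast
    ring
  have hmin : S₂ = ((m : ℝ) + 1)⁻¹ * ((m + 2) * S₁ - 1) * S₁ := by
    have hS₂ : S₂ = ((m : ℝ) + 2 - w) * (m + 1 - w) / ((m + 2) * (m + 1)) :=
      binomialSum_fixedWeight_pred_pred hw
    rw [hS₁, hS₂]
    field_simp
    ring
  refine ⟨hS₁, hmin, ?_, fun p' hp' hsum h₁ => ?_⟩
  · rw [hmin]
    field_simp
    ring
  · rw [hmin, ← h₁]
    exact binomialSum_lower_bound hp' m hsum
end
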